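/- Let G be an abelian group, g ∈ G with g² ≠ 1, K an infinite field, and consider commutators f = [[x_g, y₁^{(k₁)}, …, y_n^{(k_n)}], [x_{g⁻¹}, y₁^{(l₁)}, …, y_n^{(l_n)}]] and h = [[x_g, y₁^{(k'₁)}, …, y_m^{(k'_m)}], [x_{g⁻¹}, y₁^{(l'₁)}, …, y_m^{(l'_m)}]] with all exponents non-negative. To such a commutator f associate V_f = ((k₁,l₁), …, (k_n,l_n)) ∈ D(ℕ₀²). If V_f ⪯ V_h in the Higman order on D(ℕ₀²), then h ∈ ⟨f⟩^{T_G} + Id_G(UT₃⁽⁻⁾, Γ(g,g⁻¹)). -/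

import Mathlib

open FreeLieAlgebra

/-- The free `G`-graded Lie algebra over `K` on variables `x_{i,g}`, `i ∈ ℕ`, `g ∈ G`. -/
abbrev FL (K : Type*) [Field K] (G : Type*) := FreeLieAlgebra K (ℕ × G)

section Framework

variable (K : Type*) [Field K] (G : Type*) [CommGroup G]

/-- `IsHom K G g a` : `a` is homogeneous of degree `g` in the free graded Lie algebra. -/
inductive IsHom : G → FL K G → Prop
  | var (i : ℕ) (g : G) : IsHom g (of K (i, g))
  | zero (g : G) : IsHom g 0
  | add {g : G} {a b : FL K G} : IsHom g a → IsHom g b → IsHom g (a + b)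
  | smul {g : G} {a : FL K G} (c : K) : IsHom g a → IsHom g (c • a)
  | lie {g h : G} {a b : FL K G} : IsHom g a → IsHom h b → IsHom (g * h) ⁅a, b⁆

/-- A graded substitution: an endomorphism sending each variable `x_{i,g}` to a homogeneous
element of degree `g`. -/
def IsGradedSubst (φ : FL K G →ₗ⁅K⁆ FL K G) : Prop :=
  ∀ (i : ℕ) (g : G), IsHom K G g (φ (of K (i, g)))

/-- A `T_G`-ideal: a Lie ideal invariant under all graded substitutions. -/
def IsTIdeal (I : LieIdeal K (FL K G)) : Prop :=
  ∀ φ : FL K G →ₗ⁅K⁆ FL K G, IsGradedSubst K G φ → ∀ a ∈ I, φ a ∈ I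

/-- The `T_G`-ideal generated by a set `S`. -/
noncomputable def tClosure (S : Set (FL K G)) : LieIdeal K (FL K G) :=
  sInf {I : LieIdeal K (FL K G) | IsTIdeal K G I ∧ S ⊆ ↑I}

/-- The graded polynomial identities of a `G`-graded Lie algebra `(A, Γ)`, as a Lie ideal of the
free graded Lie algebra. -/
def gradedIdeal (A : Type*) [LieRing A] [LieAlgebra K A] (Γ : G → Submodule K A) :
    LieIdeal K (FL K G) where
  carrier := {f | ∀ ψ : FL K G →ₗ⁅K⁆ A, (∀ (i : ℕ) (g : G), ψ (of K (i, g)) ∈ Γ g) → ψ f = 0}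
  add_mem' := by
    intro a b ha hb ψ hψ
    rw [map_add ψ, ha ψ hψ, hb ψ hψ, add_zero]
  zero_mem' := by
    intro ψ _
    exact ψ.map_zero
  smul_mem' := by
    intro c a ha ψ hψ
    rw [map_smul ψ, ha ψ hψ, smul_zero]
  lie_mem := by
    intro x m hm ψ hψ
    rw [ψ.map_lie, hm ψ hψ, lie_zero]

/-- Left-normed iterated commutator `[x, l₁, l₂, …]`. -/
noncomputable def lnorm (x : FL K G) (l : List (FL K G)) : FL K G := l.foldl (fun a b => ⁅a, b⁆) x

/-- The list `y₁^{(p₁)}, …, y_r^{(p_r)}` of trivial-degree variables with multiplicities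
(0-indexed: the variables are `x_{0,1}, …, x_{r-1,1}`). -/
noncomputable def yRun (p : ℕ → ℕ) : ℕ → List (FL K G)
  | 0 => []
  | n + 1 => yRun p n ++ List.replicate (p n) (of K (n, (1 : G)))

attribute [local instance 100] LieRing.ofAssociativeRing

/-- 3×3 matrices. -/
abbrev M3 (K : Type*) [Field K] := Matrix (Fin 3) (Fin 3) K

/-- Matrix units. -/
def E3 (i j : Fin 3) : M3 K := Matrix.single i j 1

/-- The elementary grading `Γ(g,h)` on upper triangular 3×3 matrices:
`deg e₁₁ = deg e₂₂ = deg e₃₃ = 1`, `deg e₁₂ = g`, `deg e₂₃ = h`, `deg e₁₃ = gh`.  The component of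
degree `l` is the span of the matrix units of degree `l`. -/
def utGrading (g h : G) : G → Submodule K (M3 K) := fun l =>
  Submodule.span K {m : M3 K |
    (l = 1 ∧ (m = E3 K 0 0 ∨ m = E3 K 1 1 ∨ m = E3 K 2 2)) ∨
    (l = g ∧ m = E3 K 0 1) ∨ (l = h ∧ m = E3 K 1 2) ∨ (l = g * h ∧ m = E3 K 0 2)}

/-- The support of the grading `Γ(g,h)`. -/
def utSupp (g h : G) : Set G := {l | utGrading K G g h l ≠ ⊥}

/-- The graded identities `Id_G(UT₃⁽⁻⁾, Γ(g,h))`. -/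
def IdUT3 (g h : G) : LieIdeal K (FL K G) := gradedIdeal K G (M3 K) (utGrading K G g h)

/-- 2×2 matrices. -/
abbrev M2 (K : Type*) [Field K] := Matrix (Fin 2) (Fin 2) K

/-- Matrix units. -/
def E2 (i j : Fin 2) : M2 K := Matrix.single i j 1

/-- The space of upper triangular 2×2 matrices, `UT₂⁽⁻⁾`. -/
def ut2 : Submodule K (M2 K) := Submodule.span K {E2 K 0 0, E2 K 1 1, E2 K 0 1}

/-- Ordinary (ungraded) Lie polynomial identities of `UT₂⁽⁻⁾`. -/
def IdUT2 : Set (FL K G) :=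
  {f | ∀ ψ : FL K G →ₗ⁅K⁆ M2 K, (∀ (i : ℕ) (g : G), ψ (of K (i, g)) ∈ ut2 K) → ψ f = 0}

/-- The free Lie subalgebra `L(Y)` on the trivial-degree variables. -/
noncomputable def LY : LieSubalgebra K (FL K G) :=
  LieSubalgebra.lieSpan K (FL K G) {a | ∃ i : ℕ, a = of K (i, (1 : G))}

/-- Exponent bound: `0 ≤ p ℓ < |K|` when `K` is finite (no bound when `K` is infinite). -/
def expOK (r : ℕ) (p : ℕ → ℕ) : Prop := ∀ ℓ < r, Finite K → p ℓ < Nat.card K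

end Framework

/-- The Higman order on finite sequences: `l₁ ⪯ l₂` iff `l₂` has a sublist that dominates `l₁`
pointwise. -/
def Higman {α : Type*} (le : α → α → Prop) (l₁ l₂ : List α) : Prop :=
  ∃ l : List α, l.Sublist l₂ ∧ List.Forall₂ le l₁ l

/-!
Under a graded evaluation into `UT₃` with the grading `Γ(g, g⁻¹)`, `x_g ↦ α e₁₂`,
`x_{g⁻¹} ↦ β e₂₃`, and every `y_j` lands in the span of `e₁₁, e₂₂, e₃₃, e₁₃`, so it acts on `e₁₂`
and on `e₂₃` by scalars `c₁ j`, `c₂ j`. Hence `f` evaluates to `α β ∏ⱼ c₁ⱼ^{kⱼ} c₂ⱼ^{lⱼ} e₁₃`: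
modulo the identities only this monomial matters. A Higman embedding `e` with `kᵢ ≤ k'_{e i}`,
`lᵢ ≤ l'_{e i}` gives the graded substitution `y_i ↦ y_{e i}`,
`x_g ↦ [x_g, y₁^{(d₁)}, …, y_m^{(d_m)}]`, `x_{g⁻¹} ↦ [x_{g⁻¹}, y₁^{(d'₁)}, …]`, where the exponents
`d`, `d'` supply the missing powers; it sends `f` to `h` modulo `Id_G(UT₃⁽⁻⁾, Γ(g, g⁻¹))`.
-/

theorem Higman.exists_injOn {α : Type*} {le : α → α → Prop} {a b : ℕ → α} {n m : ℕ}
    (h : Higman le ((List.range n).map a) ((List.range m).map b)) :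
    ∃ e : ℕ → ℕ, (∀ i < n, e i < m) ∧ Set.InjOn e (Finset.range n) ∧
      ∀ i < n, le (a i) (b (e i)) := by
  obtain ⟨t, hsub, hle⟩ := h
  obtain ⟨s, hs, rfl⟩ := List.sublist_map_iff.mp hsub
  rw [List.forall₂_map_left_iff, List.forall₂_map_right_iff, List.forall₂_iff_get] at hle
  obtain ⟨hlen, hle⟩ := hle
  rw [List.length_range] at hlen
  have hnodup : s.Nodup := hs.nodup List.nodup_range
  refine ⟨fun i => s.getD i 0, fun i hi => ?_, fun i hi j hj hij => ?_, fun i hi => ?_⟩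
  · change s.getD i 0 < m
    rw [List.getD_eq_getElem _ _ (hlen ▸ hi)]
    exact List.mem_range.mp (hs.subset (List.getElem_mem _))
  · simp only [Finset.coe_range, Set.mem_Iio] at hi hj
    dsimp only at hij
    rwa [List.getD_eq_getElem _ _ (hlen ▸ hi), List.getD_eq_getElem _ _ (hlen ▸ hj),
      hnodup.getElem_inj_iff] at hij
  · change le (a i) (b (s.getD i 0))
    rw [List.getD_eq_getElem _ _ (hlen ▸ hi)]
    simpa using hle i (by simpa) (hlen ▸ hi)

section FiberSum

variable {M : Type*} [CommMonoid M]

def fiberSum (e k : ℕ → ℕ) (n j : ℕ) : ℕ := ∑ i ∈ Finset.range n with e i = j, k i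

theorem prod_pow_comp_eq_prod_pow_fiberSum (c : ℕ → M) {e : ℕ → ℕ} (k : ℕ → ℕ) {n m : ℕ}
    (he : ∀ i < n, e i < m) :
    ∏ i ∈ Finset.range n, c (e i) ^ k i = ∏ j ∈ Finset.range m, c j ^ fiberSum e k n j := by
  rw [← Finset.prod_fiberwise_of_maps_to (t := Finset.range m)
    (fun i hi => Finset.mem_range.mpr (he i (Finset.mem_range.mp hi)))]
  refine Finset.prod_congr rfl fun j _ => ?_
  rw [fiberSum, ← Finset.prod_pow_eq_pow_sum]
  exact Finset.prod_congr rfl fun i hi => by rw [(Finset.mem_filter.mp hi).2]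

theorem fiberSum_le {e k k' : ℕ → ℕ} {n : ℕ} (he : Set.InjOn e (Finset.range n))
    (hk : ∀ i < n, k i ≤ k' (e i)) (j : ℕ) : fiberSum e k n j ≤ k' j := by
  rcases (Finset.filter (e · = j) (Finset.range n)).eq_empty_or_nonempty with hempty | ⟨i, hi⟩
  · simp [fiberSum, hempty]
  · obtain ⟨hin, rfl⟩ := Finset.mem_filter.mp hi
    have hsingle : Finset.filter (e · = e i) (Finset.range n) = {i} :=
      Finset.eq_singleton_iff_unique_mem.mpr
        ⟨hi, fun i' hi' => he (Finset.mem_filter.mp hi').1 hin (Finset.mem_filter.mp hi').2⟩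
    rw [fiberSum, hsingle, Finset.sum_singleton]
    exact hk i (Finset.mem_range.mp hin)

theorem prod_pow_eq_prod_pow_sub_fiberSum_mul (c : ℕ → M) {e k k' : ℕ → ℕ} {n m : ℕ}
    (hem : ∀ i < n, e i < m) (he : Set.InjOn e (Finset.range n))
    (hk : ∀ i < n, k i ≤ k' (e i)) :
    ∏ j ∈ Finset.range m, c j ^ k' j =
      (∏ j ∈ Finset.range m, c j ^ (k' j - fiberSum e k n j)) *
        ∏ i ∈ Finset.range n, c (e i) ^ k i := by
  rw [prod_pow_comp_eq_prod_pow_fiberSum c k hem, ← Finset.prod_mul_distrib]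
  exact Finset.prod_congr rfl fun j _ => (pow_sub_mul_pow _ (fiberSum_le he hk j)).symm

end FiberSum

section FreeGraded

variable {K : Type*} [Field K] {G : Type*}

@[simp]
theorem lnorm_nil (x : FL K G) : lnorm K G x [] = x := rfl

theorem lnorm_cons (x a : FL K G) (L : List (FL K G)) :
    lnorm K G x (a :: L) = lnorm K G ⁅x, a⁆ L := rfl

theorem lnorm_append (x : FL K G) (L₁ L₂ : List (FL K G)) :
    lnorm K G x (L₁ ++ L₂) = lnorm K G (lnorm K G x L₁) L₂ :=
  List.foldl_append

variable {A : Type*} [LieRing A] [LieAlgebra K A] (χ : FL K G →ₗ⁅K⁆ A) {v : A}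

theorem map_lnorm_replicate {y : FL K G} {c : K} (hy : ⁅v, χ y⁆ = c • v) (N : ℕ)
    {z : FL K G} {β : K} (hz : χ z = β • v) :
    χ (lnorm K G z (List.replicate N y)) = (β * c ^ N) • v := by
  induction N generalizing z β with
  | zero => simpa using hz
  | succ N ih =>
    rw [List.replicate_succ, lnorm_cons, ih (β := β * c) (by rw [χ.map_lie, hz, smul_lie, hy,
      smul_smul]), mul_assoc, ← pow_succ']

variable [CommGroup G]

theorem map_lnorm_yRun {c : ℕ → K} (hc : ∀ j, ⁅v, χ (of K (j, 1))⁆ = c j • v) (p : ℕ → ℕ)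
    (r : ℕ) {x : FL K G} {α : K} (hx : χ x = α • v) :
    χ (lnorm K G x (yRun K G p r)) = (α * ∏ j ∈ Finset.range r, c j ^ p j) • v := by
  induction r with
  | zero => simpa [yRun] using hx
  | succ r ih =>
    rw [yRun, lnorm_append, map_lnorm_replicate χ (hc r) _ ih, Finset.prod_range_succ,
      mul_assoc]

theorem map_lie_lnorm_yRun {w : A} {c₁ c₂ : ℕ → K}
    (hc₁ : ∀ j, ⁅v, χ (of K (j, 1))⁆ = c₁ j • v) (hc₂ : ∀ j, ⁅w, χ (of K (j, 1))⁆ = c₂ j • w)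
    {x x' : FL K G} {α β : K} (hx : χ x = α • v) (hx' : χ x' = β • w) (p q : ℕ → ℕ) (r : ℕ) :
    χ ⁅lnorm K G x (yRun K G p r), lnorm K G x' (yRun K G q r)⁆ =
      ((α * ∏ j ∈ Finset.range r, c₁ j ^ p j) * (β * ∏ j ∈ Finset.range r, c₂ j ^ q j)) •
        ⁅v, w⁆ := by
  rw [χ.map_lie, map_lnorm_yRun χ hc₁ p r hx, map_lnorm_yRun χ hc₂ q r hx', smul_lie, lie_smul,
    smul_smul]

theorem mem_tClosure_of_isGradedSubst {S : Set (FL K G)} {φ : FL K G →ₗ⁅K⁆ FL K G}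
    (hφ : IsGradedSubst K G φ) {a : FL K G} (ha : a ∈ S) : φ a ∈ tClosure K G S := by
  rw [tClosure, ← SetLike.mem_coe, LieSubmodule.coe_sInf, Set.mem_iInter₂]
  exact fun I hI => hI.1 φ hφ a (hI.2 ha)

theorem isHom_lnorm_yRun {t : G} {x : FL K G} (hx : IsHom K G t x) (p : ℕ → ℕ) (r : ℕ) :
    IsHom K G t (lnorm K G x (yRun K G p r)) := by
  induction r with
  | zero => exact hx
  | succ r ih =>
    rw [yRun, lnorm_append]
    generalize lnorm K G x (yRun K G p r) = z at ih
    induction p r generalizing z with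
    | zero => exact ih
    | succ N ihN =>
      rw [List.replicate_succ, lnorm_cons]
      exact ihN _ (by simpa using ih.lie (IsHom.var r 1))

end FreeGraded

section Substitution

variable {K : Type*} [Field K] {G : Type*} [CommGroup G] [DecidableEq G]

variable (K G) in
noncomputable def pairSubst (g : G) (a b : FL K G) (e : ℕ → ℕ) : FL K G →ₗ⁅K⁆ FL K G :=
  lift K fun q =>
    if q = (0, g) then a
    else if q = (0, g⁻¹) then b
    else if q.2 = 1 then of K (e q.1, 1)
    else of K q

theorem pairSubst_of_fst (g : G) (a b : FL K G) (e : ℕ → ℕ) :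
    pairSubst K G g a b e (of K (0, g)) = a := by
  simp [pairSubst]

theorem pairSubst_of_snd {g : G} (hg : g ≠ g⁻¹) (a b : FL K G) (e : ℕ → ℕ) :
    pairSubst K G g a b e (of K (0, g⁻¹)) = b := by
  simp [pairSubst, hg.symm]

theorem pairSubst_of_one {g : G} (hg : g ≠ 1) (a b : FL K G) (e : ℕ → ℕ) (i : ℕ) :
    pairSubst K G g a b e (of K (i, 1)) = of K (e i, 1) := by
  simp [pairSubst, hg.symm, Ne.symm (inv_ne_one.mpr hg)]

theorem isGradedSubst_pairSubst {g : G} {a b : FL K G} (ha : IsHom K G g a)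
    (hb : IsHom K G g⁻¹ b) (e : ℕ → ℕ) : IsGradedSubst K G (pairSubst K G g a b e) := by
  intro i t
  rw [pairSubst, lift_of_apply]
  split_ifs with h₁ h₂ h₃
  · obtain ⟨-, rfl⟩ := Prod.mk.inj h₁; exact ha
  · obtain ⟨-, rfl⟩ := Prod.mk.inj h₂; exact hb
  · dsimp only at h₃ ⊢
    subst h₃
    exact IsHom.var (e i) 1
  · exact IsHom.var i t

end Substitution

attribute [local instance 100] LieRing.ofAssociativeRing

section UpperTriangular

variable {K : Type*} [Field K] {G : Type*} [CommGroup G] {g h : G}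

theorem utGrading_left_eq_span (hg : g ≠ 1) (hh : h ≠ 1) (hgh : g ≠ h) :
    utGrading K G g h g = K ∙ E3 K 0 1 := by
  rw [utGrading]
  congr 1
  ext x
  simp [hg, hgh, hh]

theorem utGrading_right_eq_span (hg : g ≠ 1) (hh : h ≠ 1) (hgh : g ≠ h) :
    utGrading K G g h h = K ∙ E3 K 1 2 := by
  rw [utGrading]
  congr 1
  ext x
  simp [hg, hh, hgh.symm]

theorem lie_E3_of_mem_utGrading_one (hg : g ≠ 1) (hh : h ≠ 1) {D : M3 K}
    (hD : D ∈ utGrading K G g h 1) :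
    ⁅E3 K 0 1, D⁆ = (D 1 1 - D 0 0) • E3 K 0 1 ∧ ⁅E3 K 1 2, D⁆ = (D 2 2 - D 1 1) • E3 K 1 2 := by
  induction hD using Submodule.span_induction with
  | mem D hD =>
    rcases hD with ⟨-, rfl | rfl | rfl⟩ | ⟨h', -⟩ | ⟨h', -⟩ | ⟨-, rfl⟩
    all_goals first
      | exact absurd h'.symm ‹_›
      | constructor <;> ext i j <;> fin_cases i <;> fin_cases j <;>
          simp [E3, Ring.lie_def]
  | zero => simp
  | add D D' _ _ hD hD' =>
    simp only [lie_add, hD.1, hD.2, hD'.1, hD'.2, Matrix.add_apply, ← add_smul]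
    constructor <;> ring_nf
  | smul c D _ hD =>
    simp only [lie_smul, hD.1, hD.2, Matrix.smul_apply, smul_eq_mul, smul_smul]
    constructor <;> ring_nf

end UpperTriangular

section DoubleCommutator

variable {K : Type*} [Field K] {G : Type*} [CommGroup G]

variable (K G) in
noncomputable def doubleComm (g : G) (k l : ℕ → ℕ) (n : ℕ) : FL K G :=
  ⁅lnorm K G (of K (0, g)) (yRun K G k n), lnorm K G (of K (0, g⁻¹)) (yRun K G l n)⁆

variable (K G) in
noncomputable def higmanSubst [DecidableEq G] (g : G) (e k l k' l' : ℕ → ℕ) (n m : ℕ) :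
    FL K G →ₗ⁅K⁆ FL K G :=
  pairSubst K G g (lnorm K G (of K (0, g)) (yRun K G (fun j => k' j - fiberSum e k n j) m))
    (lnorm K G (of K (0, g⁻¹)) (yRun K G (fun j => l' j - fiberSum e l n j) m)) e

theorem isGradedSubst_higmanSubst [DecidableEq G] (g : G) (e k l k' l' : ℕ → ℕ) (n m : ℕ) :
    IsGradedSubst K G (higmanSubst K G g e k l k' l' n m) :=
  isGradedSubst_pairSubst (isHom_lnorm_yRun (IsHom.var 0 g) _ _)
    (isHom_lnorm_yRun (IsHom.var 0 g⁻¹) _ _) e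

theorem doubleComm_sub_higmanSubst_mem_IdUT3 [DecidableEq G] {g : G} (hg : g ≠ 1)
    (hgi : g ≠ g⁻¹) {e k l k' l' : ℕ → ℕ} {n m : ℕ} (hem : ∀ i < n, e i < m)
    (he : Set.InjOn e (Finset.range n)) (hk : ∀ i < n, k i ≤ k' (e i))
    (hl : ∀ i < n, l i ≤ l' (e i)) :
    doubleComm K G g k' l' m - higmanSubst K G g e k l k' l' n m (doubleComm K G g k l n) ∈
      IdUT3 K G g g⁻¹ := by
  intro χ hχ
  have hgi' : g⁻¹ ≠ 1 := inv_ne_one.mpr hg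
  obtain ⟨α, hα⟩ : ∃ α : K, α • E3 K 0 1 = χ (of K (0, g)) :=
    Submodule.mem_span_singleton.mp (utGrading_left_eq_span (K := K) hg hgi' hgi ▸ hχ 0 g)
  obtain ⟨β, hβ⟩ : ∃ β : K, β • E3 K 1 2 = χ (of K (0, g⁻¹)) :=
    Submodule.mem_span_singleton.mp (utGrading_right_eq_span (K := K) hg hgi' hgi ▸ hχ 0 g⁻¹)
  set c₁ : ℕ → K := fun j => χ (of K (j, 1)) 1 1 - χ (of K (j, 1)) 0 0
  set c₂ : ℕ → K := fun j => χ (of K (j, 1)) 2 2 - χ (of K (j, 1)) 1 1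
  have hc := fun j => lie_E3_of_mem_utGrading_one hg hgi' (hχ j 1)
  set φ := higmanSubst K G g e k l k' l' n m with hφ
  have hφy : ∀ i, χ (φ (of K (i, 1))) = χ (of K (e i, 1)) := fun i => by
    rw [hφ, higmanSubst, pairSubst_of_one hg]
  have hφx : χ (φ (of K (0, g))) =
      (α * ∏ j ∈ Finset.range m, c₁ j ^ (k' j - fiberSum e k n j)) • E3 K 0 1 := by
    rw [hφ, higmanSubst, pairSubst_of_fst]
    exact map_lnorm_yRun χ (fun j => (hc j).1) _ m hα.symm
  have hφx' : χ (φ (of K (0, g⁻¹))) =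
      (β * ∏ j ∈ Finset.range m, c₂ j ^ (l' j - fiberSum e l n j)) • E3 K 1 2 := by
    rw [hφ, higmanSubst, pairSubst_of_snd hgi]
    exact map_lnorm_yRun χ (fun j => (hc j).2) _ m hβ.symm
  rw [map_sub, sub_eq_zero, ← LieHom.comp_apply, doubleComm, doubleComm,
    map_lie_lnorm_yRun χ (fun j => (hc j).1) (fun j => (hc j).2) hα.symm hβ.symm k' l' m,
    map_lie_lnorm_yRun (χ.comp φ) (c₁ := c₁ ∘ e) (c₂ := c₂ ∘ e) (fun i => hφy i ▸ (hc (e i)).1)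
      (fun i => hφy i ▸ (hc (e i)).2) hφx hφx' k l n,
    prod_pow_eq_prod_pow_sub_fiberSum_mul c₁ hem he hk,
    prod_pow_eq_prod_pow_sub_fiberSum_mul c₂ hem he hl]
  simp only [Function.comp_apply]
  congr 1
  ring

end DoubleCommutator

theorem stmt10_general (K : Type*) [Field K] (G : Type*) [CommGroup G]
    (g : G) (hg : g ^ 2 ≠ 1) (n m : ℕ) (k l k' l' : ℕ → ℕ)
    (hH : Higman (· ≤ ·) ((List.range n).map (fun i => (k i, l i)))
      ((List.range m).map (fun i => (k' i, l' i)))) :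
    ⁅lnorm K G (of K (0, g)) (yRun K G k' m),
      lnorm K G (of K (0, g⁻¹)) (yRun K G l' m)⁆ ∈
      tClosure K G
        {⁅lnorm K G (of K (0, g)) (yRun K G k n),
          lnorm K G (of K (0, g⁻¹)) (yRun K G l n)⁆} ⊔
      IdUT3 K G g g⁻¹ := by
  classical
  have hg1 : g ≠ 1 := by rintro rfl; simp at hg
  have hgi : g ≠ g⁻¹ := fun h => hg (by rw [sq, ← mul_inv_cancel g, ← h])
  obtain ⟨e, hem, he, hkl⟩ := hH.exists_injOn
  rw [LieSubmodule.mem_sup]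
  exact ⟨higmanSubst K G g e k l k' l' n m (doubleComm K G g k l n),
    mem_tClosure_of_isGradedSubst (isGradedSubst_higmanSubst g e k l k' l' n m) rfl, _,
    doubleComm_sub_higmanSubst_mem_IdUT3 hg1 hgi hem he (fun i hi => (hkl i hi).1)
      (fun i hi => (hkl i hi).2), add_sub_cancel _ _⟩

/-- **Lemma.** For `f = [[x_g, y₁^{(k₁)},…,y_n^{(k_n)}], [x_{g⁻¹}, y₁^{(l₁)},…,y_n^{(l_n)}]]`
and `h = [[x_g, y₁^{(k'₁)},…,y_m^{(k'_m)}], [x_{g⁻¹}, y₁^{(l'₁)},…,y_m^{(l'_m)}]]`, if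
`V_f ⪯ V_h` in the Higman order on `D(ℕ₀²)`, then
`h ∈ ⟨f⟩^{T_G} + Id_G(UT₃⁽⁻⁾, Γ(g, g⁻¹))`. -/
theorem stmt10 (K : Type*) [Field K] [Infinite K] (G : Type*) [CommGroup G]
    (g : G) (hg : g ^ 2 ≠ 1) (n m : ℕ) (k l k' l' : ℕ → ℕ)
    (hH : Higman (· ≤ ·) ((List.range n).map (fun i => (k i, l i)))
      ((List.range m).map (fun i => (k' i, l' i)))) :
    ⁅lnorm K G (of K (0, g)) (yRun K G k' m),
      lnorm K G (of K (0, g⁻¹)) (yRun K G l' m)⁆ ∈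
      tClosure K G
        {⁅lnorm K G (of K (0, g)) (yRun K G k n),
          lnorm K G (of K (0, g⁻¹)) (yRun K G l n)⁆} ⊔
      IdUT3 K G g g⁻¹ :=
  stmt10_general K G g hg n m k l k' l' hH
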